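/- arXiv:1802.07163 — 4 statements merged into one kernel-verified Lean document; each statement's English description precedes it below -/
import Mathlib

section
/- Let μ and ν be probability measures on ℝ^d with bounded support, with μ absolutely continuous with respect to Lebesgue measure. Suppose f : ℝ^d → ℝ^d is measurable, satisfies Measure.map f μ = ν, and f(x) = ∇φ(x) for all x, where φ : ℝ^d → ℝ is convex and differentiable. Then f minimizes the quadratic Monge cost: for every measurable g : ℝ^d → ℝ^d with Measure.map g μ = ν, one has ∫ ‖x − f(x)‖² dμ(x) ≤ ∫ ‖x − g(x)‖² dμ(x). -/
/-!
Let `A` be a compact set carrying `μ` and `ψ y = sup_{x ∈ A} (⟪x, y⟫ - φ x)` the Legendre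
transform of `φ` restricted to `A`, which is finite and continuous. Fenchel–Young gives
`⟪x, y⟫ ≤ φ x + ψ y` for `x ∈ A`, with equality at `y = ∇φ x` by the first-order inequality for
convex functions. Expanding the square, `‖x - y‖² ≥ F x + G y` with `F = ‖·‖² - 2φ` and
`G = ‖·‖² - 2ψ`, with equality on the graph of `f`. Integrating along `x ↦ (x, f x)` and
`x ↦ (x, g x)`, the `G`-terms agree because both maps push `μ` to `ν`.
-/

open MeasureTheory
open scoped RealInnerProductSpace

theorem ConvexOn.add_le_of_hasFDerivAt {E : Type*} [NormedAddCommGroup E] [NormedSpace ℝ E]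
    {s : Set E} {φ : E → ℝ} {φ' : E →L[ℝ] ℝ} {x z : E} (hφ : ConvexOn ℝ s φ)
    (hx : x ∈ s) (hz : z ∈ s) (hφ' : HasFDerivAt φ φ' x) :
    φ x + φ' (z - x) ≤ φ z := by
  have hline : ConvexOn ℝ (AffineMap.lineMap x z ⁻¹' s) (φ ∘ AffineMap.lineMap x z) :=
    hφ.comp_affineMap _
  have hderiv : HasDerivAt (φ ∘ AffineMap.lineMap x z) (φ' (z - x)) (0 : ℝ) :=
    hφ'.comp_hasDerivAt_of_eq (0 : ℝ) AffineMap.hasDerivAt_lineMap (by simp)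
  have hslope := hline.le_slope_of_hasDerivAt (x := 0) (y := 1)
    (by simpa using hx) (by simpa using hz) zero_lt_one hderiv
  simp only [slope_def_field, Function.comp_apply, AffineMap.lineMap_apply_zero,
    AffineMap.lineMap_apply_one, sub_zero, div_one] at hslope
  linarith

section Conjugate

variable {E : Type*} [NormedAddCommGroup E] [InnerProductSpace ℝ E]

noncomputable def conjugateOn (A : Set E) (φ : E → ℝ) (y : E) : ℝ :=
  sSup ((fun x => ⟪x, y⟫ - φ x) '' A)

theorem inner_le_add_conjugateOn {A : Set E} {φ : E → ℝ} (hA : IsCompact A)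
    (hφ : ContinuousOn φ A) {x : E} (hx : x ∈ A) (y : E) :
    ⟪x, y⟫ ≤ φ x + conjugateOn A φ y := by
  have hbdd : BddAbove ((fun x => ⟪x, y⟫ - φ x) '' A) :=
    (hA.image_of_continuousOn (by fun_prop)).bddAbove
  have := le_csSup hbdd (Set.mem_image_of_mem _ hx)
  rw [conjugateOn]
  linarith

theorem continuous_conjugateOn {A : Set E} {φ : E → ℝ} (hA : IsCompact A) (hφ : Continuous φ) :
    Continuous (conjugateOn A φ) :=
  hA.continuous_sSup (f := fun y x => ⟪x, y⟫ - φ x) (by fun_prop)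

theorem conjugateOn_gradient [CompleteSpace E] {A : Set E} {φ : E → ℝ}
    (hconv : ConvexOn ℝ Set.univ φ) {x : E} (hdiff : DifferentiableAt ℝ φ x) (hx : x ∈ A) :
    conjugateOn A φ (gradient φ x) = ⟪x, gradient φ x⟫ - φ x := by
  refine IsGreatest.csSup_eq ⟨Set.mem_image_of_mem _ hx, ?_⟩
  rintro _ ⟨z, -, rfl⟩
  have := hconv.add_le_of_hasFDerivAt (Set.mem_univ x) (Set.mem_univ z)
    hdiff.hasGradientAt.hasFDerivAt
  simp only [InnerProductSpace.toDual_apply_apply, inner_sub_right] at this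
  rw [real_inner_comm z, real_inner_comm x] at this
  linarith

end Conjugate

theorem exists_isCompact_ae_mem {X : Type*} [PseudoMetricSpace X] [ProperSpace X]
    [MeasurableSpace X] {μ : Measure X} (h : ∃ K : Set X, Bornology.IsBounded K ∧ μ Kᶜ = 0) :
    ∃ K : Set X, IsCompact K ∧ ∀ᵐ x ∂μ, x ∈ K := by
  obtain ⟨K, hK, hμK⟩ := h
  exact ⟨closure K, hK.isCompact_closure,
    measure_mono_null (Set.compl_subset_compl.2 subset_closure) hμK⟩

theorem integrable_comp_of_ae_mem_isCompact {α Z : Type*} [MeasurableSpace α]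
    [TopologicalSpace Z] [MeasurableSpace Z] [OpensMeasurableSpace Z]
    {μ : Measure α} [IsFiniteMeasure μ] {K : Set Z} (hK : IsCompact K) {h : Z → ℝ}
    (hh : Continuous h) {Φ : α → Z} (hΦ : AEMeasurable Φ μ) (hΦK : ∀ᵐ a ∂μ, Φ a ∈ K) :
    Integrable (fun a => h (Φ a)) μ := by
  obtain ⟨C, hC⟩ := hK.exists_bound_of_continuousOn hh.continuousOn
  exact .of_bound (hh.measurable.comp_aemeasurable hΦ).aestronglyMeasurable C
    (hΦK.mono fun a ha => hC _ ha)

theorem integral_le_integral_of_dual_certificate {X Y : Type*} [MeasurableSpace X]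
    [MeasurableSpace Y] {μ : Measure X} {ν : Measure Y} {c : X → Y → ℝ} {F : X → ℝ}
    {G : Y → ℝ} {f g : X → Y} (hf : AEMeasurable f μ) (hg : AEMeasurable g μ)
    (hfν : μ.map f = ν) (hgν : μ.map g = ν) (hF : Integrable F μ) (hG : Integrable G ν)
    (hcg : Integrable (fun x => c x (g x)) μ)
    (hf_eq : ∀ᵐ x ∂μ, c x (f x) = F x + G (f x))
    (hg_le : ∀ᵐ x ∂μ, F x + G (g x) ≤ c x (g x)) :
    ∫ x, c x (f x) ∂μ ≤ ∫ x, c x (g x) ∂μ := by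
  subst hfν
  have hGf : Integrable (fun x => G (f x)) μ := hG.comp_aemeasurable hf
  have hGg : Integrable (fun x => G (g x)) μ := (hgν ▸ hG).comp_aemeasurable hg
  have hG_map : ∫ x, G (f x) ∂μ = ∫ x, G (g x) ∂μ := by
    rw [← integral_map hf hG.aestronglyMeasurable, ← hgν,
      integral_map hg (hgν ▸ hG.aestronglyMeasurable)]
  calc ∫ x, c x (f x) ∂μ = ∫ x, F x + G (f x) ∂μ := integral_congr_ae hf_eq
    _ = ∫ x, F x + G (g x) ∂μ := by rw [integral_add hF hGf, integral_add hF hGg, hG_map]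
    _ ≤ ∫ x, c x (g x) ∂μ := integral_mono_ae (hF.add hGg) hcg hg_le

theorem brenier_sufficiency_general
    (d : ℕ) (μ ν : Measure (EuclideanSpace ℝ (Fin d)))
    [IsProbabilityMeasure μ] [IsProbabilityMeasure ν]
    (hμbdd : ∃ K : Set (EuclideanSpace ℝ (Fin d)), Bornology.IsBounded K ∧ μ Kᶜ = 0)
    (hνbdd : ∃ K : Set (EuclideanSpace ℝ (Fin d)), Bornology.IsBounded K ∧ ν Kᶜ = 0)
    (f : EuclideanSpace ℝ (Fin d) → EuclideanSpace ℝ (Fin d))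
    (hf : Measurable f) (hmap : Measure.map f μ = ν)
    (φ : EuclideanSpace ℝ (Fin d) → ℝ)
    (hφconv : ConvexOn ℝ Set.univ φ) (hφdiff : Differentiable ℝ φ)
    (hgrad : ∀ x, f x = gradient φ x) :
    ∀ g : EuclideanSpace ℝ (Fin d) → EuclideanSpace ℝ (Fin d),
      Measurable g → Measure.map g μ = ν →
      ∫ x, ‖x - f x‖ ^ 2 ∂μ ≤ ∫ x, ‖x - g x‖ ^ 2 ∂μ := by
  intro g hg hgmap
  obtain ⟨A, hA, hμA⟩ := exists_isCompact_ae_mem hμbdd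
  obtain ⟨B, hB, hνB⟩ := exists_isCompact_ae_mem hνbdd
  have hφ : Continuous φ := hφdiff.continuous
  have hψ : Continuous (conjugateOn A φ) := continuous_conjugateOn hA hφ
  have hF : Integrable (fun x => ‖x‖ ^ 2 - 2 * φ x) μ :=
    integrable_comp_of_ae_mem_isCompact hA (h := fun x => ‖x‖ ^ 2 - 2 * φ x) (by fun_prop)
      aemeasurable_id hμA
  have hG : Integrable (fun y => ‖y‖ ^ 2 - 2 * conjugateOn A φ y) ν :=
    integrable_comp_of_ae_mem_isCompact hB (h := fun y => ‖y‖ ^ 2 - 2 * conjugateOn A φ y)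
      (by fun_prop) aemeasurable_id hνB
  have hcg : Integrable (fun x => ‖x - g x‖ ^ 2) μ :=
    integrable_comp_of_ae_mem_isCompact (hA.prod hB) (h := fun p => ‖p.1 - p.2‖ ^ 2)
      (Φ := fun x => (x, g x)) (by fun_prop) (aemeasurable_id.prodMk hg.aemeasurable)
      (hμA.and (ae_of_ae_map hg.aemeasurable (hgmap ▸ hνB)))
  refine integral_le_integral_of_dual_certificate (c := fun x y => ‖x - y‖ ^ 2)
    hf.aemeasurable hg.aemeasurable hmap hgmap hF hG hcg ?_ ?_
  · filter_upwards [hμA] with x hx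
    rw [norm_sub_sq_real, hgrad, conjugateOn_gradient hφconv (hφdiff x) hx]
    ring
  · filter_upwards [hμA] with x hx
    have := inner_le_add_conjugateOn hA hφ.continuousOn hx (g x)
    rw [norm_sub_sq_real]
    linarith

/-- Sufficiency direction of Brenier's theorem: a transport map from `μ` to `ν`
that is the gradient of a convex differentiable function minimizes the
quadratic Monge cost among all transport maps from `μ` to `ν`. -/
theorem brenier_sufficiency
    (d : ℕ) (μ ν : Measure (EuclideanSpace ℝ (Fin d)))
    [IsProbabilityMeasure μ] [IsProbabilityMeasure ν]
    (hμbdd : ∃ K : Set (EuclideanSpace ℝ (Fin d)), Bornology.IsBounded K ∧ μ Kᶜ = 0)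
    (hνbdd : ∃ K : Set (EuclideanSpace ℝ (Fin d)), Bornology.IsBounded K ∧ ν Kᶜ = 0)
    (hμac : μ ≪ (volume : Measure (EuclideanSpace ℝ (Fin d))))
    (f : EuclideanSpace ℝ (Fin d) → EuclideanSpace ℝ (Fin d))
    (hf : Measurable f) (hmap : Measure.map f μ = ν)
    (φ : EuclideanSpace ℝ (Fin d) → ℝ)
    (hφconv : ConvexOn ℝ Set.univ φ) (hφdiff : Differentiable ℝ φ)
    (hgrad : ∀ x, f x = gradient φ x) :
    ∀ g : EuclideanSpace ℝ (Fin d) → EuclideanSpace ℝ (Fin d),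
      Measurable g → Measure.map g μ = ν →
      ∫ x, ‖x - f x‖ ^ 2 ∂μ ≤ ∫ x, ‖x - g x‖ ^ 2 ∂μ :=
  brenier_sufficiency_general d μ ν hμbdd hνbdd f hf hmap φ hφconv hφdiff hgrad
end

section
/- Let I₀, I₁ : ℝ^d → [0,∞) be measurable densities and let f₁ : ℝ^d → ℝ^d be measurable with Measure.map f₁ (volume.withDensity I₀) = volume.withDensity I₁, and suppose f₁(x) = ∇φ₁(x) for all x, where φ₁ : ℝ^d → ℝ is convex and differentiable. Fix μ ∈ ℝ^d and define the translated density I_μ(y) = I₁(y − μ). Then the map f_μ(x) = f₁(x) + μ satisfies Measure.map f_μ (volume.withDensity I₀) = volume.withDensity I_μ; moreover f_μ is the gradient of the convex differentiable function x ↦ φ₁(x) + ⟨μ, x⟩; and consequently the LOT transform of I_μ with respect to I₀ satisfies Î_μ(x) = (f_μ(x) − x)·√(I₀(x)) = Î₁(x) + μ·√(I₀(x)) for all x, where Î₁(x) = (f₁(x) − x)·√(I₀(x)). -/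
/-!
Translation by `μ` preserves Lebesgue measure, so pushing `I₀` forward by `f₁` and then by
`y ↦ y + μ` gives the density `y ↦ I₁ (y - μ)`. Adding the linear potential `⟪μ, ·⟫` to `φ₁`
keeps it convex and adds `μ` to its gradient.
-/

open MeasureTheory
open scoped RealInnerProductSpace ENNReal

theorem MeasureTheory.MeasurePreserving.map_withDensity {α β : Type*} [MeasurableSpace α]
    [MeasurableSpace β] {μ : Measure α} {ν : Measure β} {e : α ≃ᵐ β}
    (he : MeasurePreserving e μ ν) (g : α → ℝ≥0∞) :
    (μ.withDensity g).map e = ν.withDensity (g ∘ e.symm) := by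
  ext s hs
  rw [e.map_apply, withDensity_apply _ (e.measurable hs), withDensity_apply _ hs,
    ← he.setLIntegral_comp_preimage_emb e.measurableEmbedding]
  simp

theorem MeasureTheory.Measure.map_add_right_withDensity {G : Type*} [MeasurableSpace G]
    [AddGroup G] [MeasurableAdd G] (μ : Measure G) [μ.IsAddRightInvariant]
    (g : G → ℝ≥0∞) (a : G) :
    (μ.withDensity g).map (· + a) = μ.withDensity fun y => g (y - a) := by
  simpa [Function.comp_def, sub_eq_add_neg] using
    (measurePreserving_add_right μ a).map_withDensity (e := MeasurableEquiv.addRight a) g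

section Gradient

variable {𝕜 F : Type*} [RCLike 𝕜] [NormedAddCommGroup F] [InnerProductSpace 𝕜 F]
  [CompleteSpace F]

theorem HasGradientAt.add {f g : F → 𝕜} {f' g' x : F} (hf : HasGradientAt f f' x)
    (hg : HasGradientAt g g' x) : HasGradientAt (fun y => f y + g y) (f' + g') x := by
  rw [hasGradientAt_iff_hasFDerivAt, map_add]
  exact hf.hasFDerivAt.add hg.hasFDerivAt

theorem hasGradientAt_inner_left (a x : F) : HasGradientAt (fun y => inner 𝕜 a y) a x :=
  (InnerProductSpace.toDual 𝕜 F a).hasFDerivAt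

end Gradient

theorem lot_translation_general
    (d : ℕ) (I₀ I₁ : EuclideanSpace ℝ (Fin d) → ℝ)
    (f₁ : EuclideanSpace ℝ (Fin d) → EuclideanSpace ℝ (Fin d))
    (hf₁ : Measurable f₁)
    (hmap : Measure.map f₁ (volume.withDensity fun x => ENNReal.ofReal (I₀ x))
      = volume.withDensity fun x => ENNReal.ofReal (I₁ x))
    (φ₁ : EuclideanSpace ℝ (Fin d) → ℝ)
    (hφ₁conv : ConvexOn ℝ Set.univ φ₁) (hφ₁diff : Differentiable ℝ φ₁)
    (hgrad : ∀ x, f₁ x = gradient φ₁ x)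
    (μ : EuclideanSpace ℝ (Fin d)) :
    (Measure.map (fun x => f₁ x + μ)
        (volume.withDensity fun x => ENNReal.ofReal (I₀ x))
      = volume.withDensity fun y => ENNReal.ofReal (I₁ (y - μ))) ∧
    (ConvexOn ℝ Set.univ (fun x => φ₁ x + ⟪μ, x⟫) ∧
      Differentiable ℝ (fun x => φ₁ x + ⟪μ, x⟫) ∧
      ∀ x, f₁ x + μ = gradient (fun x => φ₁ x + ⟪μ, x⟫) x) ∧
    (∀ x, Real.sqrt (I₀ x) • ((f₁ x + μ) - x)
      = Real.sqrt (I₀ x) • (f₁ x - x) + Real.sqrt (I₀ x) • μ) := by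
  have hpotential : ∀ x, HasGradientAt (fun x => φ₁ x + ⟪μ, x⟫) (f₁ x + μ) x := fun x => by
    rw [hgrad x]
    exact (hφ₁diff x).hasGradientAt.add (hasGradientAt_inner_left μ x)
  refine ⟨?_, ⟨hφ₁conv.add ((innerₛₗ ℝ μ).convexOn convex_univ),
    fun x => (hpotential x).differentiableAt, fun x => (hpotential x).gradient.symm⟩,
    fun x => by rw [add_sub_right_comm, smul_add]⟩
  change Measure.map ((· + μ) ∘ f₁) _ = _
  rw [← Measure.map_map (measurable_add_const μ) hf₁, hmap]
  exact Measure.map_add_right_withDensity volume _ μ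

/-- Translation property of the LOT transform: if `f₁ = ∇φ₁` transports `I₀`
onto `I₁`, then `f_μ = f₁ + μ` transports `I₀` onto the translated density
`I_μ(y) = I₁(y - μ)`, it is the gradient of the convex differentiable potential
`x ↦ φ₁(x) + ⟨μ, x⟩`, and the LOT transform satisfies
`Î_μ(x) = Î₁(x) + μ √(I₀ x)`. -/
theorem lot_translation
    (d : ℕ) (I₀ I₁ : EuclideanSpace ℝ (Fin d) → ℝ)
    (hI₀m : Measurable I₀) (hI₁m : Measurable I₁)
    (hI₀nonneg : ∀ x, 0 ≤ I₀ x) (hI₁nonneg : ∀ x, 0 ≤ I₁ x)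
    (f₁ : EuclideanSpace ℝ (Fin d) → EuclideanSpace ℝ (Fin d))
    (hf₁ : Measurable f₁)
    (hmap : Measure.map f₁ (volume.withDensity fun x => ENNReal.ofReal (I₀ x))
      = volume.withDensity fun x => ENNReal.ofReal (I₁ x))
    (φ₁ : EuclideanSpace ℝ (Fin d) → ℝ)
    (hφ₁conv : ConvexOn ℝ Set.univ φ₁) (hφ₁diff : Differentiable ℝ φ₁)
    (hgrad : ∀ x, f₁ x = gradient φ₁ x)
    (μ : EuclideanSpace ℝ (Fin d)) :
    (Measure.map (fun x => f₁ x + μ)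
        (volume.withDensity fun x => ENNReal.ofReal (I₀ x))
      = volume.withDensity fun y => ENNReal.ofReal (I₁ (y - μ))) ∧
    (ConvexOn ℝ Set.univ (fun x => φ₁ x + ⟪μ, x⟫) ∧
      Differentiable ℝ (fun x => φ₁ x + ⟪μ, x⟫) ∧
      ∀ x, f₁ x + μ = gradient (fun x => φ₁ x + ⟪μ, x⟫) x) ∧
    (∀ x, Real.sqrt (I₀ x) • ((f₁ x + μ) - x)
      = Real.sqrt (I₀ x) • (f₁ x - x) + Real.sqrt (I₀ x) • μ) :=
  lot_translation_general d I₀ I₁ f₁ hf₁ hmap φ₁ hφ₁conv hφ₁diff hgrad μ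
end

section
/- Let I₀, I₁ : ℝ^d → [0,∞) be measurable densities with I₀(x) > 0 for all x, and let f₁ : ℝ^d → ℝ^d be measurable with Measure.map f₁ (volume.withDensity I₀) = volume.withDensity I₁. Let g : ℝ^d → ℝ^d be a bijective measurable map with measurable inverse g⁻¹, and let I_g : ℝ^d → [0,∞) be any density with Measure.map g (volume.withDensity I_g) = volume.withDensity I₁. Then the composed map f_g = g⁻¹ ∘ f₁ satisfies Measure.map f_g (volume.withDensity I₀) = volume.withDensity I_g, and its LOT transform with respect to I₀ satisfies Î_g(x) = (g⁻¹(Î₁(x)/√(I₀(x)) + x) − x)·√(I₀(x)) for all x, where Î₁(x) = (f₁(x) − x)·√(I₀(x)). -/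
/-!
Pushing `μ_{I₁}` forward by `g⁻¹` gives `(g⁻¹ ∘ f₁)_* μ_{I₀}` via `f₁`, and `μ_{I_g}` via `g`,
because `g⁻¹ ∘ g = id`. The LOT formula holds because dividing `Î₁(x)` by `√(I₀ x) ≠ 0` and
adding `x` recovers `f₁ x`.
-/

open MeasureTheory

namespace MeasureTheory.Measure

theorem map_leftInverse_comp_of_map_eq_map {α β γ : Type*} [MeasurableSpace α]
    [MeasurableSpace β] [MeasurableSpace γ] {μ : Measure α} {ρ : Measure γ}
    {f : α → β} {g : γ → β} {ginv : β → γ} (hf : AEMeasurable f μ) (hg : AEMeasurable g ρ)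
    (hginv : Measurable ginv) (hgli : Function.LeftInverse ginv g) (h : μ.map f = ρ.map g) :
    μ.map (ginv ∘ f) = ρ :=
  calc μ.map (ginv ∘ f)
      = (ρ.map g).map ginv := by rw [← hginv.aemeasurable.map_map_of_aemeasurable hf, h]
    _ = ρ := by rw [hginv.aemeasurable.map_map_of_aemeasurable hg, hgli.comp_eq_id, map_id]

end MeasureTheory.Measure

theorem lot_composition_general
    (d : ℕ) (I₀ I₁ Ig : EuclideanSpace ℝ (Fin d) → ℝ)
    (hI₀pos : ∀ x, 0 < I₀ x)
    (f₁ : EuclideanSpace ℝ (Fin d) → EuclideanSpace ℝ (Fin d))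
    (hf₁ : Measurable f₁)
    (hmap₁ : Measure.map f₁ (volume.withDensity fun x => ENNReal.ofReal (I₀ x))
      = volume.withDensity fun x => ENNReal.ofReal (I₁ x))
    (g ginv : EuclideanSpace ℝ (Fin d) → EuclideanSpace ℝ (Fin d))
    (hg : Measurable g) (hginv : Measurable ginv)
    (hgli : Function.LeftInverse ginv g)
    (hmapg : Measure.map g (volume.withDensity fun x => ENNReal.ofReal (Ig x))
      = volume.withDensity fun x => ENNReal.ofReal (I₁ x)) :
    (Measure.map (ginv ∘ f₁) (volume.withDensity fun x => ENNReal.ofReal (I₀ x))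
      = volume.withDensity fun x => ENNReal.ofReal (Ig x)) ∧
    (∀ x, Real.sqrt (I₀ x) • (ginv (f₁ x) - x)
      = Real.sqrt (I₀ x) •
          (ginv ((Real.sqrt (I₀ x))⁻¹ • (Real.sqrt (I₀ x) • (f₁ x - x)) + x) - x)) := by
  refine ⟨Measure.map_leftInverse_comp_of_map_eq_map hf₁.aemeasurable hg.aemeasurable hginv
    hgli (hmap₁.trans hmapg.symm), fun x => ?_⟩
  have hsqrt : Real.sqrt (I₀ x) ≠ 0 := (Real.sqrt_pos.mpr (hI₀pos x)).ne'
  rw [inv_smul_smul₀ hsqrt, sub_add_cancel]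

/-- Composition property of the LOT transform: if `f₁` transports `I₀` onto
`I₁`, `g` is a bijective measurable map with measurable inverse `ginv`, and
`I_g` is a density with `g` pushing `I_g` forward onto `I₁`, then
`f_g = g⁻¹ ∘ f₁` transports `I₀` onto `I_g` and the LOT transform satisfies
`Î_g(x) = (g⁻¹(Î₁(x)/√(I₀ x) + x) - x) √(I₀ x)`. -/
theorem lot_composition
    (d : ℕ) (I₀ I₁ Ig : EuclideanSpace ℝ (Fin d) → ℝ)
    (hI₀m : Measurable I₀) (hI₁m : Measurable I₁) (hIgm : Measurable Ig)
    (hI₀pos : ∀ x, 0 < I₀ x) (hI₁nonneg : ∀ x, 0 ≤ I₁ x) (hIgnonneg : ∀ x, 0 ≤ Ig x)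
    (f₁ : EuclideanSpace ℝ (Fin d) → EuclideanSpace ℝ (Fin d))
    (hf₁ : Measurable f₁)
    (hmap₁ : Measure.map f₁ (volume.withDensity fun x => ENNReal.ofReal (I₀ x))
      = volume.withDensity fun x => ENNReal.ofReal (I₁ x))
    (g ginv : EuclideanSpace ℝ (Fin d) → EuclideanSpace ℝ (Fin d))
    (hg : Measurable g) (hginv : Measurable ginv)
    (hgli : Function.LeftInverse ginv g) (hgri : Function.RightInverse ginv g)
    (hmapg : Measure.map g (volume.withDensity fun x => ENNReal.ofReal (Ig x))
      = volume.withDensity fun x => ENNReal.ofReal (I₁ x)) :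
    (Measure.map (ginv ∘ f₁) (volume.withDensity fun x => ENNReal.ofReal (I₀ x))
      = volume.withDensity fun x => ENNReal.ofReal (Ig x)) ∧
    (∀ x, Real.sqrt (I₀ x) • (ginv (f₁ x) - x)
      = Real.sqrt (I₀ x) •
          (ginv ((Real.sqrt (I₀ x))⁻¹ • (Real.sqrt (I₀ x) • (f₁ x - x)) + x) - x)) :=
  lot_composition_general d I₀ I₁ Ig hI₀pos f₁ hf₁ hmap₁ g ginv hg hginv hgli hmapg
end

section
/- Let I₀, p₀, q₀ : ℝ^d → [0,∞) be measurable densities with I₀(x) > 0 for all x, and let f₀, g₀ : ℝ^d → ℝ^d be measurable maps with Measure.map f₀ (volume.withDensity I₀) = volume.withDensity p₀ and Measure.map g₀ (volume.withDensity I₀) = volume.withDensity q₀. Let H be a set of bijective measurable maps h : ℝ^d → ℝ^d with measurable inverses, satisfying: (i) h ∈ H implies h⁻¹ ∈ H; (ii) for every finite family h₁,…,h_n ∈ H and real weights α₁,…,α_n with Σ αᵢ = 1, the pointwise combination x ↦ Σ αᵢ·hᵢ(x) belongs to H; (iii) h₁, h₂ ∈ H implies h₁ ∘ h₂ ∈ H.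 Assume that for every h ∈ H, Measure.map h (volume.withDensity p₀) ≠ volume.withDensity q₀ (the classes do not overlap). Then the convex hulls of the two transformed classes are disjoint: for every finite families h₁,…,h_m ∈ H and h'₁,…,h'_n ∈ H and convex weights α₁,…,α_m > 0 with Σ αᵢ = 1 and β₁,…,β_n > 0 with Σ βⱼ = 1, the functions x ↦ Σᵢ αᵢ·(hᵢ⁻¹(f₀(x)) − x)·√(I₀(x)) and x ↦ Σⱼ βⱼ·(h'ⱼ⁻¹(g₀(x)) − x)·√(I₀(x)) are not equal as functions ℝ^d → ℝ^d. -/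
/-!
The LOT transform is affine in the transport map, so a convex combination of the transforms
of class elements with maps `hᵢ⁻¹ ∘ f₀` is the transform of `A ∘ f₀`, where `A = ∑ αᵢ hᵢ⁻¹ ∈ H`.
Since `√I₀ > 0`, equal combinations for the two classes force `A ∘ f₀ = B ∘ g₀`, and then
`B⁻¹ ∘ A ∈ H` pushes `p₀` forward to `q₀`, contradicting non-overlap.
-/

open MeasureTheory

theorem Finset.sum_smul_smul_sub_of_sum_eq_one {ι R E : Type*} [Fintype ι] [CommRing R]
    [AddCommGroup E] [Module R E] {α : ι → R} (hα : ∑ i, α i = 1) (c : R) (v : ι → E) (x : E) :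
    ∑ i, α i • (c • (v i - x)) = c • ((∑ i, α i • v i) - x) := by
  simp only [smul_sub, smul_comm (α _) c, Finset.sum_sub_distrib, ← Finset.smul_sum,
    ← Finset.sum_smul, hα, one_smul]

theorem MeasureTheory.Measure.map_map_of_comp_eq_comp {X Y Z W : Type*} [MeasurableSpace X]
    [MeasurableSpace Y] [MeasurableSpace Z] [MeasurableSpace W] {μ : Measure X}
    {f : X → Y} {g : X → Z} {A : Y → W} {B : Z → W} {B' : W → Z}
    (hf : Measurable f) (hB'A : Measurable (B' ∘ A)) (hB' : Function.LeftInverse B' B)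
    (h : A ∘ f = B ∘ g) : (μ.map f).map (B' ∘ A) = μ.map g := by
  rw [Measure.map_map hB'A hf, Function.comp_assoc, h, ← Function.comp_assoc,
    hB'.comp_eq_id, Function.id_comp]

theorem lot_linear_separability_general
    (d : ℕ) (I₀ p₀ q₀ : EuclideanSpace ℝ (Fin d) → ℝ)
    (hI₀pos : ∀ x, 0 < I₀ x)
    (f₀ g₀ : EuclideanSpace ℝ (Fin d) → EuclideanSpace ℝ (Fin d))
    (hf₀ : Measurable f₀)
    (hmapf₀ : Measure.map f₀ (volume.withDensity fun x => ENNReal.ofReal (I₀ x))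
      = volume.withDensity fun x => ENNReal.ofReal (p₀ x))
    (hmapg₀ : Measure.map g₀ (volume.withDensity fun x => ENNReal.ofReal (I₀ x))
      = volume.withDensity fun x => ENNReal.ofReal (q₀ x))
    (H : Set (EuclideanSpace ℝ (Fin d) → EuclideanSpace ℝ (Fin d)))
    (hHgood : ∀ h ∈ H, Measurable h ∧ Function.Bijective h ∧
      Measurable (Function.invFun h))
    (hHinv : ∀ h ∈ H, Function.invFun h ∈ H)
    (hHcomb : ∀ (n : ℕ) (h : Fin n → EuclideanSpace ℝ (Fin d) → EuclideanSpace ℝ (Fin d))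
      (α : Fin n → ℝ), (∀ i, h i ∈ H) → (∑ i, α i) = 1 →
      (fun x => ∑ i, α i • h i x) ∈ H)
    (hHcomp : ∀ h₁ ∈ H, ∀ h₂ ∈ H, h₁ ∘ h₂ ∈ H)
    (hnonoverlap : ∀ h ∈ H,
      Measure.map h (volume.withDensity fun x => ENNReal.ofReal (p₀ x))
        ≠ volume.withDensity fun x => ENNReal.ofReal (q₀ x)) :
    ∀ (m n : ℕ)
      (h : Fin m → EuclideanSpace ℝ (Fin d) → EuclideanSpace ℝ (Fin d))
      (h' : Fin n → EuclideanSpace ℝ (Fin d) → EuclideanSpace ℝ (Fin d))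
      (α : Fin m → ℝ) (β : Fin n → ℝ),
      (∀ i, h i ∈ H) → (∀ j, h' j ∈ H) →
      (∀ i, 0 < α i) → (∑ i, α i) = 1 →
      (∀ j, 0 < β j) → (∑ j, β j) = 1 →
      (fun x => ∑ i, α i • (Real.sqrt (I₀ x) • (Function.invFun (h i) (f₀ x) - x)))
        ≠ (fun x => ∑ j, β j • (Real.sqrt (I₀ x) • (Function.invFun (h' j) (g₀ x) - x))) := by
  intro m n h h' α β hH hH' _ hα _ hβ hEq
  set A := fun x => ∑ i, α i • Function.invFun (h i) x
  set B := fun x => ∑ j, β j • Function.invFun (h' j) x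
  have hAH : A ∈ H := hHcomb m _ α (fun i => hHinv _ (hH i)) hα
  have hBH : B ∈ H := hHcomb n _ β (fun j => hHinv _ (hH' j)) hβ
  have hAB : A ∘ f₀ = B ∘ g₀ := funext fun x => by
    have hx := congrFun hEq x
    simp only [Finset.sum_smul_smul_sub_of_sum_eq_one hα,
      Finset.sum_smul_smul_sub_of_sum_eq_one hβ] at hx
    exact sub_left_injective (smul_right_injective _ (Real.sqrt_pos.2 (hI₀pos x)).ne' hx)
  have hC : Function.invFun B ∘ A ∈ H := hHcomp _ (hHinv B hBH) _ hAH
  refine hnonoverlap _ hC ?_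
  rw [← hmapf₀, ← hmapg₀]
  exact Measure.map_map_of_comp_eq_comp hf₀ (hHgood _ hC).1
    (Function.leftInverse_invFun (hHgood B hBH).2.1.1) hAB

/-- Linear separability in LOT space (Theorem 2 of the paper): under the
generative model where the two classes are generated from mother densities
`p₀` and `q₀` by the maps of a family `H` closed under inversion, convex
combinations and composition, and where the classes do not overlap, the
convex hulls of the LOT transforms of the two classes are disjoint. -/
theorem lot_linear_separability
    (d : ℕ) (I₀ p₀ q₀ : EuclideanSpace ℝ (Fin d) → ℝ)
    (hI₀m : Measurable I₀) (hp₀m : Measurable p₀) (hq₀m : Measurable q₀)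
    (hI₀pos : ∀ x, 0 < I₀ x) (hp₀nonneg : ∀ x, 0 ≤ p₀ x) (hq₀nonneg : ∀ x, 0 ≤ q₀ x)
    (f₀ g₀ : EuclideanSpace ℝ (Fin d) → EuclideanSpace ℝ (Fin d))
    (hf₀ : Measurable f₀) (hg₀ : Measurable g₀)
    (hmapf₀ : Measure.map f₀ (volume.withDensity fun x => ENNReal.ofReal (I₀ x))
      = volume.withDensity fun x => ENNReal.ofReal (p₀ x))
    (hmapg₀ : Measure.map g₀ (volume.withDensity fun x => ENNReal.ofReal (I₀ x))
      = volume.withDensity fun x => ENNReal.ofReal (q₀ x))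
    (H : Set (EuclideanSpace ℝ (Fin d) → EuclideanSpace ℝ (Fin d)))
    (hHgood : ∀ h ∈ H, Measurable h ∧ Function.Bijective h ∧
      Measurable (Function.invFun h))
    (hHinv : ∀ h ∈ H, Function.invFun h ∈ H)
    (hHcomb : ∀ (n : ℕ) (h : Fin n → EuclideanSpace ℝ (Fin d) → EuclideanSpace ℝ (Fin d))
      (α : Fin n → ℝ), (∀ i, h i ∈ H) → (∑ i, α i) = 1 →
      (fun x => ∑ i, α i • h i x) ∈ H)
    (hHcomp : ∀ h₁ ∈ H, ∀ h₂ ∈ H, h₁ ∘ h₂ ∈ H)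
    (hnonoverlap : ∀ h ∈ H,
      Measure.map h (volume.withDensity fun x => ENNReal.ofReal (p₀ x))
        ≠ volume.withDensity fun x => ENNReal.ofReal (q₀ x)) :
    ∀ (m n : ℕ)
      (h : Fin m → EuclideanSpace ℝ (Fin d) → EuclideanSpace ℝ (Fin d))
      (h' : Fin n → EuclideanSpace ℝ (Fin d) → EuclideanSpace ℝ (Fin d))
      (α : Fin m → ℝ) (β : Fin n → ℝ),
      (∀ i, h i ∈ H) → (∀ j, h' j ∈ H) →
      (∀ i, 0 < α i) → (∑ i, α i) = 1 →
      (∀ j, 0 < β j) → (∑ j, β j) = 1 →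
      (fun x => ∑ i, α i • (Real.sqrt (I₀ x) • (Function.invFun (h i) (f₀ x) - x)))
        ≠ (fun x => ∑ j, β j • (Real.sqrt (I₀ x) • (Function.invFun (h' j) (g₀ x) - x))) :=
  lot_linear_separability_general d I₀ p₀ q₀ hI₀pos f₀ g₀ hf₀ hmapf₀ hmapg₀ H hHgood hHinv hHcomb
    hHcomp hnonoverlap
end
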